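/- There exists a constant C > 0 such that for all ξ ≥ 2 and all w ∈ (−1,1) one has |∫_{−1}^{1} Φ₀(ξ,w,z) dz − E(ξ,w)| ≤ C·ξ⁻³, where E(ξ,w) = (3/(2π²))·(1 − u²)·ξ⁻² if u = ξ(1−|w|) < 1, and E(ξ,w) = 0 otherwise. -/

import Mathlib

open Real Set MeasureTheory

noncomputable def Υ (x : ℝ) : ℝ := if x ≤ 0 then 0 else if x < 1 then x else 1

noncomputable def Φ₀ (ξ w z : ℝ) : ℝ :=
  if w + z ≠ 0 then (6 / π ^ 2) * Υ (1 + (ξ⁻¹ - max |w| |z| - 1) / |w + z|)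
  else if ξ⁻¹ < 1 + |w| then 0 else 6 / π ^ 2

/-- The main asymptotic term of `∫_{−1}^{1} Φ₀(ξ,w,z) dz` as `ξ → ∞`. -/
noncomputable def E₁ (ξ w : ℝ) : ℝ :=
  if ξ * (1 - |w|) < 1 then
    (3 / (2 * π ^ 2)) * (1 - (ξ * (1 - |w|)) ^ 2) * ξ⁻¹ ^ 2
  else 0

/-!
For `w ≥ 0` and `ξ ≥ 2` the kernel is `(6/π²) T(z) / (w + z)`, where
`T(z) = max (min w z - (1 - ξ⁻¹)) 0` is a tent of height and width at most `ξ⁻¹`, supported where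
`w + z ∈ (2 - 2ξ⁻¹, 2]`. Replacing `w + z` by `2` therefore costs at most `ξ⁻¹ · (6/π²) T(z)`
pointwise, `(3/π²) ∫ T` is exactly `E₁ ξ w`, and `∫ T ≤ ξ⁻² / 2`. Negative `w` reduce to `|w|`
through `z ↦ -z`.
-/

theorem Υ_of_nonpos {x : ℝ} (hx : x ≤ 0) : Υ x = 0 := if_pos hx

theorem Υ_of_mem_Ioo {x : ℝ} (hx : x ∈ Ioo 0 1) : Υ x = x := by
  rw [Υ, if_neg hx.1.not_ge, if_pos hx.2]

/-- The denominator `max (w + z) 1` equals `w + z` wherever the numerator is nonzero; it makes the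
right-hand side continuous in `z`. -/
theorem Φ₀_eq_of_nonneg {ξ w : ℝ} (hξ : ξ⁻¹ ≤ 1 / 2) (hw : 0 ≤ w) (z : ℝ) :
    Φ₀ ξ w z = 6 / π ^ 2 * (max (min w z - (1 - ξ⁻¹)) 0 / max (w + z) 1) := by
  rcases le_or_gt (min w z) (1 - ξ⁻¹) with hmin | hmin
  · rw [max_eq_right (by linarith), zero_div, mul_zero, Φ₀]
    split_ifs with hwz hlt
    · have hpos : 0 < |w + z| := abs_pos.2 hwz
      have habs : |w + z| ≤ 1 + max |w| |z| - ξ⁻¹ := abs_le.2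
        ⟨by linarith [neg_le_abs z, le_max_right |w| |z|],
         by linarith [min_add_max w z, max_le_max (le_abs_self w) (le_abs_self z)]⟩
      have hquot : (ξ⁻¹ - max |w| |z| - 1) / |w + z| ≤ -1 := by
        rw [div_le_iff₀ hpos]; linarith
      rw [Υ_of_nonpos (by linarith), mul_zero]
    · rfl
    · linarith [abs_nonneg w]
  · have hwc : 1 - ξ⁻¹ < w := hmin.trans_le (min_le_left w z)
    have hzc : 1 - ξ⁻¹ < z := hmin.trans_le (min_le_right w z)
    have hwz : 1 < w + z := by linarith
    have harg : 1 + (ξ⁻¹ - max w z - 1) / (w + z) = (min w z - (1 - ξ⁻¹)) / (w + z) := by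
      field_simp; linarith [min_add_max w z]
    have hmem : (min w z - (1 - ξ⁻¹)) / (w + z) ∈ Ioo 0 1 :=
      ⟨div_pos (by linarith) (by linarith),
       (div_lt_one (by linarith)).2 (by linarith [min_le_left w z])⟩
    rw [Φ₀, if_pos (by linarith), abs_of_nonneg hw, abs_of_pos (by linarith : 0 < z),
      abs_of_pos (by linarith : 0 < w + z), harg, Υ_of_mem_Ioo hmem, max_eq_left hwz.le,
      max_eq_left (by linarith)]

theorem continuous_tent (w c : ℝ) : Continuous fun z : ℝ => max (min w z - c) 0 := by
  fun_prop

theorem integral_tent {a b c w : ℝ} (hac : a ≤ c) (hwb : w ≤ b) :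
    ∫ z in a..b, max (min w z - c) 0 = max (w - c) 0 * (2 * b - w - c) / 2 := by
  rcases le_or_gt w c with hwc | hcw
  · have hzero : ∀ z, max (min w z - c) 0 = 0 := fun z =>
      max_eq_right (by linarith [min_le_left w z])
    simp only [hzero, intervalIntegral.integral_zero, max_eq_right (sub_nonpos.2 hwc), zero_mul,
      zero_div]
  · have hint : ∀ x y, IntervalIntegrable (fun z => max (min w z - c) 0) volume x y :=
      fun x y => (continuous_tent w c).intervalIntegrable x y
    have h₁ : ∫ z in a..c, max (min w z - c) 0 = 0 := by
      refine (intervalIntegral.integral_congr fun z hz => ?_).trans intervalIntegral.integral_zero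
      rw [uIcc_of_le hac] at hz
      exact max_eq_right (by linarith [min_le_right w z, hz.2])
    have h₂ : ∫ z in c..w, max (min w z - c) 0 = ∫ z in c..w, (z - c) := by
      refine intervalIntegral.integral_congr fun z hz => ?_
      rw [uIcc_of_le hcw.le] at hz
      simp only [min_eq_right hz.2, max_eq_left (sub_nonneg.2 hz.1)]
    have h₃ : ∫ z in w..b, max (min w z - c) 0 = ∫ _ in w..b, (w - c) := by
      refine intervalIntegral.integral_congr fun z hz => ?_
      rw [uIcc_of_le hwb] at hz
      simp only [min_eq_left hz.1, max_eq_left (sub_nonneg.2 hcw.le)]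
    rw [← intervalIntegral.integral_add_adjacent_intervals (hint a c) (hint c b),
      ← intervalIntegral.integral_add_adjacent_intervals (hint c w) (hint w b), h₁, h₂, h₃,
      intervalIntegral.integral_sub intervalIntegral.intervalIntegrable_id
        intervalIntegrable_const,
      integral_id, intervalIntegral.integral_const, intervalIntegral.integral_const, smul_eq_mul,
      smul_eq_mul, max_eq_left (sub_nonneg.2 hcw.le)]
    ring

theorem E₁_eq_of_nonneg {ξ w : ℝ} (hξ : 0 < ξ) (hw : 0 ≤ w) :
    E₁ ξ w = 3 / π ^ 2 * (max (w - (1 - ξ⁻¹)) 0 * (2 * 1 - w - (1 - ξ⁻¹)) / 2) := by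
  rw [E₁, abs_of_nonneg hw]
  split_ifs with h
  · have hlt : 1 - w < ξ⁻¹ := by rw [← one_div]; exact (lt_div_iff₀' hξ).2 h
    rw [max_eq_left (by linarith)]
    field_simp
    ring
  · have hle : ξ⁻¹ ≤ 1 - w := by rw [← one_div, div_le_iff₀' hξ]; linarith
    rw [max_eq_right (by linarith)]
    ring

/-- On the support of the tent, `2 (1 - c) < w + z ≤ 2`, so replacing `max (w + z) 1` by `2`
costs a relative error of at most `1 - c`. -/
theorem abs_tent_div_sub_tent_div_two_le {w z c : ℝ} (hw : w ≤ 1) (hz : z ≤ 1) :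
    |max (min w z - c) 0 / max (w + z) 1 - max (min w z - c) 0 / 2| ≤
      (1 - c) * max (min w z - c) 0 := by
  rcases le_or_gt (min w z) c with h | h
  · simp [max_eq_right (sub_nonpos.2 h)]
  · have hwc : c < w := h.trans_le (min_le_left w z)
    have hzc : c < z := h.trans_le (min_le_right w z)
    set M := max (w + z) 1
    have hM1 : 1 ≤ M := le_max_right _ _
    have hMwz : w + z ≤ M := le_max_left _ _
    have hM2 : M ≤ 2 := max_le (by linarith) (by norm_num)
    rw [max_eq_left (sub_nonneg.2 h.le), div_sub_div _ _ (by positivity) two_ne_zero,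
      abs_of_nonneg (div_nonneg (by nlinarith) (by positivity)), div_le_iff₀ (by positivity)]
    have hgap : 2 - M ≤ 2 * (1 - c) * M := by
      nlinarith [mul_le_mul_of_nonneg_left hM1 (by linarith : (0 : ℝ) ≤ 1 - c)]
    nlinarith [mul_le_mul_of_nonneg_left hgap (sub_nonneg.2 h.le)]

theorem abs_integral_Φ₀_sub_E₁_le_of_nonneg {ξ w : ℝ} (hξ : 2 ≤ ξ) (hw₀ : 0 ≤ w) (hw₁ : w ≤ 1) :
    |(∫ z in (-1 : ℝ)..1, Φ₀ ξ w z) - E₁ ξ w| ≤ 3 / π ^ 2 * ξ⁻¹ ^ 3 := by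
  have hξ₀ : 0 < ξ := by linarith
  have hε₀ : 0 < ξ⁻¹ := inv_pos.2 hξ₀
  have hε : ξ⁻¹ ≤ 1 / 2 := by rw [one_div]; exact inv_anti₀ two_pos hξ
  set ε := ξ⁻¹
  set T : ℝ → ℝ := fun z => max (min w z - (1 - ε)) 0
  have hT : Continuous T := continuous_tent w (1 - ε)
  have hQ : Continuous fun z => T z / max (w + z) 1 :=
    hT.div (by fun_prop) fun z => (zero_lt_one.trans_le (le_max_right _ _)).ne'
  have hintT : ∫ z in (-1 : ℝ)..1, T z = max (w - (1 - ε)) 0 * (2 * 1 - w - (1 - ε)) / 2 :=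
    integral_tent (by linarith) hw₁
  have hΦ : ∫ z in (-1 : ℝ)..1, Φ₀ ξ w z = ∫ z in (-1 : ℝ)..1, 6 / π ^ 2 * (T z / max (w + z) 1) :=
    intervalIntegral.integral_congr fun z _ => Φ₀_eq_of_nonneg hε hw₀ z
  have hE : E₁ ξ w = ∫ z in (-1 : ℝ)..1, 3 / π ^ 2 * T z := by
    rw [intervalIntegral.integral_const_mul, hintT, E₁_eq_of_nonneg hξ₀ hw₀]
  have hpointwise : ∀ z ∈ Ioc (-1 : ℝ) 1,
      ‖6 / π ^ 2 * (T z / max (w + z) 1) - 3 / π ^ 2 * T z‖ ≤ 6 / π ^ 2 * (ε * T z) := by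
    intro z hz
    have key := abs_tent_div_sub_tent_div_two_le (c := 1 - ε) hw₁ hz.2
    rw [sub_sub_cancel] at key
    rw [Real.norm_eq_abs, show 6 / π ^ 2 * (T z / max (w + z) 1) - 3 / π ^ 2 * T z =
        6 / π ^ 2 * (T z / max (w + z) 1 - T z / 2) by ring, abs_mul,
      abs_of_pos (by positivity : (0 : ℝ) < 6 / π ^ 2)]
    gcongr
  have htent_le : max (w - (1 - ε)) 0 * (2 * 1 - w - (1 - ε)) / 2 ≤ ε ^ 2 / 2 := by
    rcases max_cases (w - (1 - ε)) 0 with ⟨hmax, _⟩ | ⟨hmax, _⟩ <;> rw [hmax] <;> nlinarith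
  calc |(∫ z in (-1 : ℝ)..1, Φ₀ ξ w z) - E₁ ξ w|
      = ‖∫ z in (-1 : ℝ)..1, (6 / π ^ 2 * (T z / max (w + z) 1) - 3 / π ^ 2 * T z)‖ := by
        rw [hΦ, hE, intervalIntegral.integral_sub ((hQ.const_mul _).intervalIntegrable _ _)
          ((hT.const_mul _).intervalIntegrable _ _), Real.norm_eq_abs]
    _ ≤ ∫ z in (-1 : ℝ)..1, 6 / π ^ 2 * (ε * T z) :=
        intervalIntegral.norm_integral_le_of_norm_le (by norm_num)
          (Filter.Eventually.of_forall hpointwise)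
          (((hT.const_mul _).const_mul _).intervalIntegrable _ _)
    _ = 6 / π ^ 2 * (ε * (max (w - (1 - ε)) 0 * (2 * 1 - w - (1 - ε)) / 2)) := by
        rw [intervalIntegral.integral_const_mul, intervalIntegral.integral_const_mul, hintT]
    _ ≤ 6 / π ^ 2 * (ε * (ε ^ 2 / 2)) := by gcongr
    _ = 3 / π ^ 2 * ε ^ 3 := by ring

theorem Φ₀_neg (ξ w z : ℝ) : Φ₀ ξ (-w) z = Φ₀ ξ w (-z) := by
  simp only [Φ₀, show -w + z = -(w + -z) by ring, abs_neg, ne_eq, neg_eq_zero]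

theorem integral_Φ₀_abs (ξ w : ℝ) :
    ∫ z in (-1 : ℝ)..1, Φ₀ ξ |w| z = ∫ z in (-1 : ℝ)..1, Φ₀ ξ w z := by
  rcases abs_choice w with h | h
  · rw [h]
  · simp only [h, Φ₀_neg, intervalIntegral.integral_comp_neg fun z => Φ₀ ξ w z, neg_neg]

theorem E₁_abs (ξ w : ℝ) : E₁ ξ |w| = E₁ ξ w := by rw [E₁, E₁, abs_abs]

/-- Uniform asymptotics: `∫_{−1}^{1} Φ₀(ξ,w,z) dz = E₁(ξ,w) + O(ξ⁻³)` as
`ξ → ∞`, uniformly in `w ∈ (−1,1)`. -/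
theorem stmt16 :
    ∃ C : ℝ, 0 < C ∧ ∀ ξ w : ℝ, 2 ≤ ξ → w ∈ Ioo (-1 : ℝ) 1 →
      |(∫ z in (-1 : ℝ)..1, Φ₀ ξ w z) - E₁ ξ w| ≤ C * ξ⁻¹ ^ 3 := by
  refine ⟨3 / π ^ 2, by positivity, fun ξ w hξ hw => ?_⟩
  rw [← integral_Φ₀_abs, ← E₁_abs]
  exact abs_integral_Φ₀_sub_E₁_le_of_nonneg hξ (abs_nonneg w) (abs_le.2 ⟨hw.1.le, hw.2.le⟩)
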